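/- arXiv:2311.17759 — 2 statements merged into one kernel-verified Lean document; each statement's English description precedes it below -/
import Mathlib

section
/- Let X be a set, f : X → X a bijection, h : X → ℝ a function, and α > 1 a real number such that |h(f(x)) − α h(x)| ≤ C for all x ∈ X and some constant C ≥ 0. Then for each x ∈ X the limit ĥ(x) := lim_{m→∞} h(f^m(x)) / α^m exists, satisfies |ĥ(x) − h(x)| ≤ C/(α − 1), and satisfies ĥ(f(x)) = α ĥ(x). -/
open Filter Topology

/-! The normalized heights `h (f^[m] x) / α ^ m` move by at most `C / α ^ (m + 1)` from one step
to the next, so they form a Cauchy sequence dominated by a geometric series of ratio `1 / α`;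
summing that series bounds the distance from `h x` to the limit by `(C / α) / (1 - 1 / α)
= C / (α - 1)`. The functional equation holds because the normalized heights of `f x` are `α`
times the shifted normalized heights of `x`. -/

namespace CanonicalHeight

variable {X : Type*} (f : X → X) (h : X → ℝ) (α : ℝ)

noncomputable def normalizedHeight (x : X) (m : ℕ) : ℝ := h (f^[m] x) / α ^ m

noncomputable def canonicalHeight (x : X) : ℝ := limUnder atTop (normalizedHeight f h α x)

variable {f h α}

theorem normalizedHeight_map (hα : α ≠ 0) (x : X) (m : ℕ) :
    normalizedHeight f h α (f x) m = α * normalizedHeight f h α x (m + 1) := by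
  rw [normalizedHeight, normalizedHeight, Function.iterate_succ_apply, pow_succ]
  field_simp

variable {C : ℝ} (hα : 1 < α) (hquasi : ∀ x, |h (f x) - α * h x| ≤ C)
include hα hquasi

theorem dist_normalizedHeight_succ_le (x : X) (m : ℕ) :
    dist (normalizedHeight f h α x m) (normalizedHeight f h α x (m + 1)) ≤
      C / α * (1 / α) ^ m := by
  have hpow : 0 < α ^ (m + 1) := pow_pos (by linarith) _
  have hdiff : normalizedHeight f h α x (m + 1) - normalizedHeight f h α x m =
      (h (f (f^[m] x)) - α * h (f^[m] x)) / α ^ (m + 1) := by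
    rw [normalizedHeight, normalizedHeight, Function.iterate_succ_apply', pow_succ]
    field_simp
  calc dist (normalizedHeight f h α x m) (normalizedHeight f h α x (m + 1))
      = |h (f (f^[m] x)) - α * h (f^[m] x)| / α ^ (m + 1) := by
        rw [dist_comm, Real.dist_eq, hdiff, abs_div, abs_of_pos hpow]
    _ ≤ C / α ^ (m + 1) := by gcongr; exact hquasi _
    _ = C / α * (1 / α) ^ m := by rw [one_div_pow, pow_succ]; field_simp

theorem tendsto_canonicalHeight (x : X) :
    Tendsto (normalizedHeight f h α x) atTop (𝓝 (canonicalHeight f h α x)) :=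
  (cauchySeq_of_le_geometric _ _ ((div_lt_one (by linarith)).2 hα)
    (dist_normalizedHeight_succ_le hα hquasi x)).tendsto_limUnder

theorem abs_canonicalHeight_sub_le (x : X) : |canonicalHeight f h α x - h x| ≤ C / (α - 1) := by
  have hdist := dist_le_of_le_geometric_of_tendsto₀ _ _
    ((div_lt_one (by linarith)).2 hα)
    (dist_normalizedHeight_succ_le hα hquasi x) (tendsto_canonicalHeight hα hquasi x)
  have hbound : C / α / (1 - 1 / α) = C / (α - 1) := by
    field_simp [show α - 1 ≠ 0 by linarith]
  rw [hbound, Real.dist_eq, abs_sub_comm] at hdist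
  simpa [normalizedHeight] using hdist

theorem canonicalHeight_map (x : X) :
    canonicalHeight f h α (f x) = α * canonicalHeight f h α x := by
  have hshift := ((tendsto_add_atTop_iff_nat 1).2 (tendsto_canonicalHeight hα hquasi x)).const_mul α
  simp_rw [← normalizedHeight_map (by linarith : α ≠ 0)] at hshift
  exact tendsto_nhds_unique (tendsto_canonicalHeight hα hquasi (f x)) hshift

end CanonicalHeight

open CanonicalHeight in
theorem canonical_height_exists_general
    {X : Type*} (f : X → X)
    (h : X → ℝ) (α : ℝ) (hα : 1 < α) (C : ℝ)
    (hquasi : ∀ x, |h (f x) - α * h x| ≤ C) :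
    ∃ hhat : X → ℝ,
      (∀ x, Tendsto (fun m : ℕ => h (f^[m] x) / α ^ m) atTop (𝓝 (hhat x))) ∧
      (∀ x, |hhat x - h x| ≤ C / (α - 1)) ∧
      (∀ x, hhat (f x) = α * hhat x) :=
  ⟨canonicalHeight f h α, tendsto_canonicalHeight hα hquasi,
    abs_canonicalHeight_sub_le hα hquasi, canonicalHeight_map hα hquasi⟩

/-- Call–Silverman telescoping construction of the canonical height. -/
theorem canonical_height_exists
    {X : Type*} (f : X → X) (hf : Function.Bijective f)
    (h : X → ℝ) (α : ℝ) (hα : 1 < α) (C : ℝ) (hC : 0 ≤ C)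
    (hquasi : ∀ x, |h (f x) - α * h x| ≤ C) :
    ∃ hhat : X → ℝ,
      (∀ x, Tendsto (fun m : ℕ => h (f^[m] x) / α ^ m) atTop (𝓝 (hhat x))) ∧
      (∀ x, |hhat x - h x| ≤ C / (α - 1)) ∧
      (∀ x, hhat (f x) = α * hhat x) :=
  canonical_height_exists_general f h α hα C hquasi
end

section
/- Let X be a set, g₁,…,g_n commuting bijections of X, and ĥ₁,…,ĥ_n : X → ℝ functions with positive reals χ_j(g_i) such that ĥ_j(g_i(x)) = χ_j(g_i) ĥ_j(x) for all i, j, x, where χ_i(g_i) > 1 and χ_j(g_i) < 1 for j ≠ i. Suppose there is a constant C with ∑_{j=1}^n ĥ_j(y) ≥ −C for all y in the (forward and backward) orbit of a point x under the group generated by g₁,…,g_n. Then ĥ_i(x) ≥ 0 for every i. -/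
/-!
Iterating `g i` multiplies `ĥ j` by `χ_j(g_i) ^ m`, so the orbit bound gives
`-C ≤ ∑ j, χ_j(g_i) ^ m * ĥ j x` for every `m`. Dividing by `χ_i(g_i) ^ m`, the left side tends
to `0` while the right side tends to `ĥ i x`, because `χ_i(g_i)` strictly dominates every other
`χ_j(g_i)`.
-/

open Filter Topology

lemma Equiv.Perm.apply_pow_apply_eq_pow_mul {X M : Type*} [Monoid M] {σ : Equiv.Perm X}
    {f : X → M} {a : M} (h : ∀ y, f (σ y) = a * f y) (m : ℕ) (y : X) :
    f ((σ ^ m) y) = a ^ m * f y := by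
  have hsemiconj : Function.Semiconj f σ (a * ·) := h
  rw [Equiv.Perm.coe_pow, (hsemiconj.iterate_right m).eq, mul_left_iterate]

lemma tendsto_sum_div_pow_mul_of_abs_lt {ι : Type*} [Fintype ι]
    {w a : ι → ℝ} {i : ι} (hi : w i ≠ 0) (hw : ∀ j ≠ i, |w j| < |w i|) :
    Tendsto (fun m : ℕ => ∑ j, (w j / w i) ^ m * a j) atTop (𝓝 (a i)) := by
  classical
  have hterm : ∀ j, Tendsto (fun m : ℕ => (w j / w i) ^ m * a j) atTop
      (𝓝 (if j = i then a i else 0)) := by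
    intro j
    by_cases hj : j = i
    · subst hj
      simp [div_self hi]
    · have hratio : |w j / w i| < 1 := by
        rw [abs_div, div_lt_one (abs_pos.mpr hi)]
        exact hw j hj
      simpa [hj] using (tendsto_pow_atTop_nhds_zero_of_abs_lt_one hratio).mul_const (a j)
  simpa using tendsto_finsetSum Finset.univ fun j _ => hterm j

lemma nonneg_of_forall_neg_le_sum_pow_mul {ι : Type*} [Fintype ι]
    {w a : ι → ℝ} {i : ι} {C : ℝ} (hi : 1 < w i) (hw : ∀ j ≠ i, |w j| < w i)
    (hbound : ∀ m : ℕ, -C ≤ ∑ j, w j ^ m * a j) : 0 ≤ a i := by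
  have hwi : 0 < w i := one_pos.trans hi
  have hscaled : ∀ m : ℕ, -C / w i ^ m ≤ ∑ j, (w j / w i) ^ m * a j := fun m => by
    calc -C / w i ^ m ≤ (∑ j, w j ^ m * a j) / w i ^ m := by gcongr; exact hbound m
      _ = ∑ j, (w j / w i) ^ m * a j := by
        rw [Finset.sum_div]
        exact Finset.sum_congr rfl fun j _ => by rw [div_pow]; ring
  have hleft : Tendsto (fun m : ℕ => -C / w i ^ m) atTop (𝓝 0) :=
    tendsto_const_nhds.div_atTop (tendsto_pow_atTop_atTop_of_one_lt hi)
  have hright := tendsto_sum_div_pow_mul_of_abs_lt (a := a) hwi.ne' fun j hj => by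
    rw [abs_of_pos hwi]
    exact hw j hj
  exact le_of_tendsto_of_tendsto' hleft hright hscaled

theorem canonical_heights_nonneg_on_orbit_general
    {X : Type*} {n : ℕ} (g : Fin n → Equiv.Perm X)
    (hhat : Fin n → X → ℝ) (c : Fin n → Fin n → ℝ)
    (hcpos : ∀ i j, 0 < c i j)
    (hdiag : ∀ i, 1 < c i i)
    (hoff : ∀ i j, j ≠ i → c i j < 1)
    (hscale : ∀ (i j : Fin n) (y : X), hhat j (g i y) = c i j * hhat j y)
    (x : X) (C : ℝ)
    (hbound : ∀ y ∈ MulAction.orbit (Subgroup.closure (Set.range g)) x,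
      -C ≤ ∑ j, hhat j y) :
    ∀ i, 0 ≤ hhat i x := by
  intro i
  have hdominant : ∀ j ≠ i, |c i j| < c i i := fun j hj => by
    rw [abs_of_pos (hcpos i j)]
    exact (hoff i j hj).trans (hdiag i)
  have hpow_bound : ∀ m : ℕ, -C ≤ ∑ j, c i j ^ m * hhat j x := fun m => by
    have hgi : g i ^ m ∈ Subgroup.closure (Set.range g) :=
      pow_mem (Subgroup.subset_closure (Set.mem_range_self i)) m
    simpa only [Subgroup.mk_smul, Equiv.Perm.smul_def,
      Equiv.Perm.apply_pow_apply_eq_pow_mul (hscale i _)] using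
      hbound _ (MulAction.mem_orbit x ⟨g i ^ m, hgi⟩)
  exact nonneg_of_forall_neg_le_sum_pow_mul (a := (hhat · x)) (hdiag i) hdominant hpow_bound

/-- Nonnegativity of the canonical heights at points whose orbit under the group generated
by the commuting automorphisms `g i` has the sum of heights bounded below. -/
theorem canonical_heights_nonneg_on_orbit
    {X : Type*} {n : ℕ} (g : Fin n → Equiv.Perm X)
    (hcomm : ∀ i j, Commute (g i) (g j))
    (hhat : Fin n → X → ℝ) (c : Fin n → Fin n → ℝ)
    (hcpos : ∀ i j, 0 < c i j)
    (hdiag : ∀ i, 1 < c i i)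
    (hoff : ∀ i j, j ≠ i → c i j < 1)
    (hscale : ∀ (i j : Fin n) (y : X), hhat j (g i y) = c i j * hhat j y)
    (x : X) (C : ℝ)
    (hbound : ∀ y ∈ MulAction.orbit (Subgroup.closure (Set.range g)) x,
      -C ≤ ∑ j, hhat j y) :
    ∀ i, 0 ≤ hhat i x :=
  canonical_heights_nonneg_on_orbit_general g hhat c hcpos hdiag hoff hscale x C hbound
end
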